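/- Let G₁, G₂ be symmetric positive definite matrices and A have full row rank. If (c_i, μ_i) solve the KKT systems with matrices G_i and the same right-hand side b, then c₁ − c₂ = [G₁⁻¹ − G₁⁻¹Aᵀ(AG₁⁻¹Aᵀ)⁻¹AG₁⁻¹](G₂ − G₁) c₂. -/

import Mathlib

/-!
Subtracting the two KKT systems, `(c₁ - c₂, μ₁ - μ₂)` solves the saddle-point system with matrix
`G₁` and right-hand side `((G₂ - G₁) c₂, 0)`. Full row rank of `A` makes the Schur complement
`A G₁⁻¹ Aᵀ` positive definite, so this system can be solved by block elimination.
-/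

open Matrix

namespace Matrix

variable {K : Type*} {m n : Type*} [Fintype m] [Fintype n]

theorem vecMul_injective_of_rank_eq_card [Field K] {A : Matrix m n K}
    (hA : A.rank = Fintype.card m) : Function.Injective A.vecMul := by
  rw [vecMul_injective_iff, linearIndependent_iff_card_eq_finrank_span, ← hA,
    rank_eq_finrank_span_row, Set.finrank]

/- Eliminating `d = G⁻¹ (Aᵀ ν + w)` turns `A d = 0` into the Schur-complement equation
`(A G⁻¹ Aᵀ) ν = -A G⁻¹ w`. -/
theorem saddlePoint_solution_eq [CommRing K] [DecidableEq m] [DecidableEq n]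
    {G : Matrix n n K} {A : Matrix m n K} (hG : IsUnit G.det) (hS : IsUnit (A * G⁻¹ * Aᵀ).det)
    {d w : n → K} {ν : m → K} (h₁ : G *ᵥ d = Aᵀ *ᵥ ν + w) (h₂ : A *ᵥ d = 0) :
    d = (G⁻¹ - G⁻¹ * Aᵀ * (A * G⁻¹ * Aᵀ)⁻¹ * A * G⁻¹) *ᵥ w := by
  have hd : d = G⁻¹ *ᵥ (Aᵀ *ᵥ ν + w) := by
    rw [← h₁, mulVec_mulVec, nonsing_inv_mul _ hG, one_mulVec]
  have hSν : (A * G⁻¹ * Aᵀ) *ᵥ ν = -((A * G⁻¹) *ᵥ w) := by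
    simp only [hd, mulVec_add, mulVec_mulVec, ← Matrix.mul_assoc] at h₂
    exact eq_neg_of_add_eq_zero_left h₂
  have hν : ν = -(((A * G⁻¹ * Aᵀ)⁻¹ * (A * G⁻¹)) *ᵥ w) := by
    rw [← mulVec_mulVec, ← mulVec_neg, ← hSν, mulVec_mulVec, nonsing_inv_mul _ hS, one_mulVec]
  rw [hd, hν]
  simp only [mulVec_add, mulVec_neg, mulVec_mulVec, sub_mulVec, Matrix.mul_assoc]
  abel

end Matrix

theorem stmt13_general {n m : ℕ}
    (G₁ G₂ : Matrix (Fin n) (Fin n) ℝ) (A : Matrix (Fin m) (Fin n) ℝ)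
    (b : Fin m → ℝ) (c₁ c₂ : Fin n → ℝ) (μ₁ μ₂ : Fin m → ℝ)
    (hG₁ : G₁.PosDef) (hA : A.rank = m)
    (h11 : G₁ *ᵥ c₁ - Aᵀ *ᵥ μ₁ = 0) (h12 : A *ᵥ c₁ = b)
    (h21 : G₂ *ᵥ c₂ - Aᵀ *ᵥ μ₂ = 0) (h22 : A *ᵥ c₂ = b) :
    c₁ - c₂ =
      (G₁⁻¹ - G₁⁻¹ * Aᵀ * (A * G₁⁻¹ * Aᵀ)⁻¹ * A * G₁⁻¹) *ᵥ
        ((G₂ - G₁) *ᵥ c₂) := by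
  have hAinj : Function.Injective A.vecMul :=
    vecMul_injective_of_rank_eq_card (by rw [hA, Fintype.card_fin])
  have hS : (A * G₁⁻¹ * Aᵀ).PosDef := by
    simpa only [conjTranspose_eq_transpose_of_trivial] using
      hG₁.inv.mul_mul_conjTranspose_same hAinj
  refine saddlePoint_solution_eq (ν := μ₁ - μ₂)
    ((isUnit_iff_isUnit_det _).mp hG₁.isUnit) ((isUnit_iff_isUnit_det _).mp hS.isUnit) ?_ ?_
  · rw [sub_eq_zero] at h11 h21
    rw [mulVec_sub, mulVec_sub, sub_mulVec, h11, h21]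
    abel
  · rw [mulVec_sub, h12, h22, sub_self]

/-- If `(c_i, μ_i)` solve the KKT systems `[[G_i, −Aᵀ],[A, 0]][c_i; μ_i] = [0; b]`
with symmetric positive definite `G_i` and full-row-rank `A`, then
`c₁ − c₂ = [G₁⁻¹ − G₁⁻¹Aᵀ(AG₁⁻¹Aᵀ)⁻¹AG₁⁻¹](G₂ − G₁)c₂`. -/
theorem stmt13 {n m : ℕ}
    (G₁ G₂ : Matrix (Fin n) (Fin n) ℝ) (A : Matrix (Fin m) (Fin n) ℝ)
    (b : Fin m → ℝ) (c₁ c₂ : Fin n → ℝ) (μ₁ μ₂ : Fin m → ℝ)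
    (hG₁ : G₁.PosDef) (hG₂ : G₂.PosDef) (hA : A.rank = m)
    (h11 : G₁ *ᵥ c₁ - Aᵀ *ᵥ μ₁ = 0) (h12 : A *ᵥ c₁ = b)
    (h21 : G₂ *ᵥ c₂ - Aᵀ *ᵥ μ₂ = 0) (h22 : A *ᵥ c₂ = b) :
    c₁ - c₂ =
      (G₁⁻¹ - G₁⁻¹ * Aᵀ * (A * G₁⁻¹ * Aᵀ)⁻¹ * A * G₁⁻¹) *ᵥ
        ((G₂ - G₁) *ᵥ c₂) :=
  stmt13_general G₁ G₂ A b c₁ c₂ μ₁ μ₂ hG₁ hA h11 h12 h21 h22
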